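/- For z = x + iy in the upper half plane and α > 0, the two-dimensional theta function θ(α; z) = ∑_{(m,n) ∈ ℤ²} exp(-πα|mz + n|²/y) satisfies θ(α; z) = √(y/α) ∑_{n ∈ ℤ} e^{-απy n²} θ₁(y/α, nx), where θ₁(X, Y) = X^{-1/2} ∑_{k ∈ ℤ} e^{-π(k - Y)²/X} is the one-dimensional theta function. -/
import Mathlib


/-- One-dimensional theta function (Poisson-summed form). -/
noncomputable def theta1 (X Y : ℝ) : ℝ :=
  X ^ (-(1/2 : ℝ)) * ∑' k : ℤ, Real.exp (-Real.pi * ((k : ℝ) - Y)^2 / X)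

lemma summable_exp_neg_mul_sq_int {c : ℝ} (hc : 0 < c) :
    Summable fun n : ℤ => Real.exp (-c * (n : ℝ) ^ 2) := by
  have hnat : Summable fun n : ℕ => Real.exp (-c * (n : ℝ) ^ 2) := by
    refine Summable.of_nonneg_of_le (fun n => (Real.exp_pos _).le) (fun n => ?_)
      (summable_geometric_of_lt_one (Real.exp_pos (-c)).le
        (Real.exp_lt_one_iff.mpr (by linarith)))
    rw [← Real.exp_nat_mul]
    apply Real.exp_le_exp.mpr
    have hn : (n : ℝ) ≤ (n : ℝ) ^ 2 := by
      exact_mod_cast Nat.le_self_pow two_ne_zero n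
    nlinarith [Nat.cast_nonneg (α := ℝ) n]
  apply Summable.of_nat_of_neg <;> simpa using hnat

theorem theta2_expansion (α x y : ℝ) (hα : 0 < α) (hy : 0 < y) :
    (∑' p : ℤ × ℤ, Real.exp (-Real.pi * α * (((p.1 : ℝ) * x + (p.2 : ℝ))^2 + (p.1 : ℝ)^2 * y^2) / y)) =
      Real.sqrt (y / α) * ∑' n : ℤ, Real.exp (-α * Real.pi * y * (n : ℝ)^2) * theta1 (y / α) ((n : ℝ) * x) := by
  have hπ := Real.pi_pos
  set a : ℝ := Real.pi * α / y with ha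
  have haa : 0 < a := by positivity
  set C : ℝ := max ((1 + 2 * x ^ 2) / y ^ 2) 2 with hC
  have hC2 : (2 : ℝ) ≤ C := le_max_right _ _
  have hCpos : 0 < C := by linarith
  have hC1 : 1 + 2 * x ^ 2 ≤ C * y ^ 2 := by
    have := le_max_left ((1 + 2 * x ^ 2) / y ^ 2) 2
    rw [div_le_iff₀ (by positivity)] at this
    linarith
  have hQ : ∀ m n : ℝ, (a / C) * (m ^ 2 + n ^ 2) ≤ a * ((m * x + n) ^ 2 + m ^ 2 * y ^ 2) := by
    intro m n
    rw [div_mul_eq_mul_div, div_le_iff₀ hCpos]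
    have key : m ^ 2 + n ^ 2 ≤ C * ((m * x + n) ^ 2 + m ^ 2 * y ^ 2) := by
      nlinarith [sq_nonneg (2 * m * x + n), sq_nonneg (m * x + n), sq_nonneg m, sq_nonneg n]
    nlinarith [haa.le]
  -- summability of the 2D family
  have hsum : Summable fun p : ℤ × ℤ =>
      Real.exp (-Real.pi * α * (((p.1 : ℝ) * x + (p.2 : ℝ))^2 + (p.1 : ℝ)^2 * y^2) / y) := by
    have hb : 0 < a / C := by positivity
    refine Summable.of_nonneg_of_le (fun p => (Real.exp_pos _).le) (fun p => ?_)
      (((summable_exp_neg_mul_sq_int hb).mul_of_nonneg (summable_exp_neg_mul_sq_int hb)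
        (fun n => (Real.exp_pos _).le) (fun n => (Real.exp_pos _).le)))
    rw [← Real.exp_add]
    apply Real.exp_le_exp.mpr
    have h1 : -Real.pi * α * (((p.1 : ℝ) * x + (p.2 : ℝ))^2 + (p.1 : ℝ)^2 * y^2) / y
        = -(a * (((p.1 : ℝ) * x + (p.2 : ℝ))^2 + (p.1 : ℝ)^2 * y^2)) := by
      rw [ha]; ring
    rw [h1]
    have := hQ (p.1 : ℝ) (p.2 : ℝ)
    linarith
  rw [Summable.tsum_prod' hsum (fun b => hsum.prod_factor b)]
  set X : ℝ := y / α with hX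
  have hXpos : 0 < X := by positivity
  rw [← tsum_mul_left]
  apply tsum_congr
  intro m
  -- split the exponential
  have hsplit : ∀ n : ℤ,
      Real.exp (-Real.pi * α * (((m : ℝ) * x + (n : ℝ))^2 + (m : ℝ)^2 * y^2) / y)
        = Real.exp (-α * Real.pi * y * (m : ℝ)^2) * Real.exp (-Real.pi * ((n : ℝ) + (m : ℝ) * x)^2 / X) := by
    intro n
    rw [← Real.exp_add]
    congr 1
    rw [hX]
    field_simp
    ring
  simp_rw [hsplit]
  rw [tsum_mul_left]
  -- reindex n ↦ -k
  have hre : (∑' n : ℤ, Real.exp (-Real.pi * ((n : ℝ) + (m : ℝ) * x)^2 / X))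
      = ∑' k : ℤ, Real.exp (-Real.pi * ((k : ℝ) - (m : ℝ) * x)^2 / X) := by
    rw [← (Equiv.neg ℤ).tsum_eq fun n : ℤ => Real.exp (-Real.pi * ((n : ℝ) + (m : ℝ) * x)^2 / X)]
    apply tsum_congr
    intro k
    congr 1
    push_cast [Equiv.neg_apply]
    ring
  rw [hre]
  -- now assemble theta1
  rw [theta1]
  have hsqrt : Real.sqrt X * X ^ (-(1/2 : ℝ)) = 1 := by
    rw [Real.sqrt_eq_rpow, ← Real.rpow_add hXpos]
    norm_num
  calc Real.exp (-α * Real.pi * y * (m : ℝ)^2) *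
        ∑' k : ℤ, Real.exp (-Real.pi * ((k : ℝ) - (m : ℝ) * x)^2 / X)
      = Real.sqrt X * (Real.exp (-α * Real.pi * y * (m : ℝ)^2) *
        (X ^ (-(1/2 : ℝ)) * ∑' k : ℤ, Real.exp (-Real.pi * ((k : ℝ) - (m : ℝ) * x)^2 / X))) := by
        rw [show Real.sqrt X * (Real.exp (-α * Real.pi * y * (m : ℝ)^2) *
          (X ^ (-(1/2 : ℝ)) * ∑' k : ℤ, Real.exp (-Real.pi * ((k : ℝ) - (m : ℝ) * x)^2 / X)))
          = (Real.sqrt X * X ^ (-(1/2 : ℝ))) * (Real.exp (-α * Real.pi * y * (m : ℝ)^2) *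
          ∑' k : ℤ, Real.exp (-Real.pi * ((k : ℝ) - (m : ℝ) * x)^2 / X)) from by ring, hsqrt, one_mul]
    _ = _ := rfl
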